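/- arXiv:math/0001169 — 5 statements merged into one kernel-verified Lean document; each statement's English description precedes it below -/
import Mathlib

section
/- (Generalized Farkas Lemma) Let v₁, …, v_n, u₁, …, u_m ∈ ℝ^k. There exists a vector w ∈ ℝ^k with ⟨w, v_i⟩ ≥ 0 for all 1 ≤ i ≤ n, with at least one of these inner products strictly positive, and with ⟨u_j, w⟩ = 0 for all 1 ≤ j ≤ m, if and only if NO linear combination ∑_{j=1}^m a_j u_j lies in the open convex cone generated by v₁, …, v_n. -/
open Matrix

lemma myDotSum {k : ℕ} {ι : Type*} (s : Finset ι) (w : Fin k → ℝ) (f : ι → (Fin k → ℝ)) :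
    w ⬝ᵥ (∑ i ∈ s, f i) = ∑ i ∈ s, w ⬝ᵥ f i := by
  simp [dotProduct, Finset.mul_sum]
  rw [Finset.sum_comm]

lemma myFarkas {k : ℕ} : ∀ (n : ℕ) (x : Fin n → (Fin k → ℝ)) (b : Fin k → ℝ),
    (∃ l : Fin n → ℝ, (∀ i, 0 ≤ l i) ∧ b = ∑ i, l i • x i) ∨
    (∃ w : Fin k → ℝ, (∀ i, 0 ≤ w ⬝ᵥ x i) ∧ w ⬝ᵥ b < 0) := by
  intro n
  induction n with
  | zero =>
    intro x b
    by_cases hb : b = 0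
    · exact Or.inl ⟨0, fun i => le_refl _, by simp [hb]⟩
    · refine Or.inr ⟨-b, fun i => i.elim0, ?_⟩
      have h1 : 0 < b ⬝ᵥ b := by
        rcases lt_or_eq_of_le (Finset.sum_nonneg fun i _ => mul_self_nonneg (b i)) with h | h
        · exact h
        · exact absurd (dotProduct_self_eq_zero.mp h.symm) hb
      simpa using neg_neg_iff_pos.mpr h1
  | succ n ih =>
    intro x b
    rcases ih (fun j => x j.castSucc) b with ⟨l, hl, hb⟩ | ⟨w, hw, hwb⟩
    · refine Or.inl ⟨Fin.snoc l 0, ?_, ?_⟩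
      · intro i
        refine Fin.lastCases ?_ ?_ i <;> simp [Fin.snoc_castSucc, hl]
      · rw [Fin.sum_univ_castSucc]
        simp [Fin.snoc_castSucc, hb]
    · set c := w ⬝ᵥ x (Fin.last n) with hc
      by_cases hcpos : 0 ≤ c
      · refine Or.inr ⟨w, ?_, hwb⟩
        intro i
        refine Fin.lastCases ?_ ?_ i
        · exact hcpos
        · exact fun j => hw j
      · push_neg at hcpos
        have hcne : c ≠ 0 := ne_of_lt hcpos
        set x' : Fin n → (Fin k → ℝ) :=
          fun j => x j.castSucc - ((w ⬝ᵥ x j.castSucc) / c) • x (Fin.last n) with hx'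
        set b' : Fin k → ℝ := b - ((w ⬝ᵥ b) / c) • x (Fin.last n) with hb'
        rcases ih x' b' with ⟨l, hl, hsum⟩ | ⟨w', hw', hw'b⟩
        · -- b in cone
          set A : ℝ := (w ⬝ᵥ b) / c with hA
          set q : Fin n → ℝ := fun j => (w ⬝ᵥ x j.castSucc) / c with hq
          set t : ℝ := A - ∑ j, l j * q j with ht
          have htnn : 0 ≤ t := by
            have h1 : 0 < A := div_pos_of_neg_of_neg hwb hcpos
            have h2 : ∑ j, l j * q j ≤ 0 := by
              refine Finset.sum_nonpos fun j _ => mul_nonpos_of_nonneg_of_nonpos (hl j) ?_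
              exact div_nonpos_of_nonneg_of_nonpos (hw j) hcpos.le
            linarith
          refine Or.inl ⟨Fin.snoc l t, ?_, ?_⟩
          · intro i
            refine Fin.lastCases ?_ ?_ i
            · simpa using htnn
            · intro j; simpa using hl j
          · rw [Fin.sum_univ_castSucc]
            simp only [Fin.snoc_castSucc, Fin.snoc_last]
            have key : ∑ j, l j • x' j =
                ∑ j, l j • x j.castSucc - (∑ j, l j * q j) • x (Fin.last n) := by
              rw [Finset.sum_smul, ← Finset.sum_sub_distrib]
              refine Finset.sum_congr rfl fun j _ => ?_
              simp only [hx', hq, smul_sub, smul_smul]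
            have hb2 : b - A • x (Fin.last n) =
                ∑ j, l j • x j.castSucc - (∑ j, l j * q j) • x (Fin.last n) := by
              rw [← key, ← hsum, hb']
            rw [sub_eq_iff_eq_add] at hb2
            rw [ht, sub_smul, hb2]
            abel
        · refine Or.inr ⟨w' - ((w' ⬝ᵥ x (Fin.last n)) / c) • w, ?_, ?_⟩
          · intro i
            refine Fin.lastCases ?_ ?_ i
            · simp only [sub_dotProduct, smul_dotProduct, smul_eq_mul, ← hc]
              rw [div_mul_cancel₀ _ hcne]
              simp
            · intro j
              have := hw' j
              rw [hx'] at this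
              simp only [dotProduct_sub, dotProduct_smul, smul_eq_mul] at this
              simp only [sub_dotProduct, smul_dotProduct, smul_eq_mul]
              calc 0 ≤ w' ⬝ᵥ x j.castSucc - w ⬝ᵥ x j.castSucc / c * (w' ⬝ᵥ x (Fin.last n)) := this
                _ = w' ⬝ᵥ x j.castSucc - w' ⬝ᵥ x (Fin.last n) / c * (w ⬝ᵥ x j.castSucc) := by ring
          · rw [hb'] at hw'b
            simp only [dotProduct_sub, dotProduct_smul, smul_eq_mul] at hw'b
            simp only [sub_dotProduct, smul_dotProduct, smul_eq_mul]
            calc w' ⬝ᵥ b - w' ⬝ᵥ x (Fin.last n) / c * (w ⬝ᵥ b)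
                = w' ⬝ᵥ b - w ⬝ᵥ b / c * (w' ⬝ᵥ x (Fin.last n)) := by ring
              _ < 0 := hw'b

lemma myStiemke {k : ℕ} (N : ℕ) (x : Fin N → (Fin k → ℝ)) :
    (∃ μ : Fin N → ℝ, (∀ i, 0 < μ i) ∧ ∑ i, μ i • x i = 0) ∨
    (∃ w : Fin k → ℝ, (∀ i, 0 ≤ w ⬝ᵥ x i) ∧ ∃ i, 0 < w ⬝ᵥ x i) := by
  by_cases h : ∀ i : Fin N, ∃ l : Fin N → ℝ, (∀ j, 0 ≤ l j) ∧ (-(x i)) = ∑ j, l j • x j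
  · left
    choose l hl hx using h
    refine ⟨fun j => (∑ i, l i j) + 1,
      fun j => add_pos_of_nonneg_of_pos (Finset.sum_nonneg fun i _ => hl i j) one_pos, ?_⟩
    have : ∑ j, ((∑ i, l i j) + 1) • x j
        = ∑ i, (∑ j, l i j • x j) + ∑ j, x j := by
      calc ∑ j, ((∑ i, l i j) + 1) • x j
          = ∑ j, (∑ i, l i j • x j + x j) := by
            refine Finset.sum_congr rfl fun j _ => ?_
            rw [add_smul, one_smul, Finset.sum_smul]
        _ = ∑ j, (∑ i, l i j • x j) + ∑ j, x j := Finset.sum_add_distrib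
        _ = ∑ i, (∑ j, l i j • x j) + ∑ j, x j := by rw [Finset.sum_comm]
    rw [this]
    have : ∑ i, (∑ j, l i j • x j) = ∑ i, (-(x i)) := by
      refine Finset.sum_congr rfl fun i _ => (hx i).symm
    rw [this]
    simp
  · push_neg at h
    obtain ⟨i, hi⟩ := h
    rcases myFarkas N x (-(x i)) with ⟨l, hl, hsum⟩ | ⟨w, hw, hwb⟩
    · exact absurd hsum (hi l hl)
    · refine Or.inr ⟨w, hw, i, ?_⟩
      rw [dotProduct_neg] at hwb
      linarith

lemma myStiemke' {k : ℕ} {ι : Type*} [Fintype ι] (x : ι → (Fin k → ℝ)) :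
    (∃ μ : ι → ℝ, (∀ i, 0 < μ i) ∧ ∑ i, μ i • x i = 0) ∨
    (∃ w : Fin k → ℝ, (∀ i, 0 ≤ w ⬝ᵥ x i) ∧ ∃ i, 0 < w ⬝ᵥ x i) := by
  obtain e := Fintype.equivFin ι
  rcases myStiemke (Fintype.card ι) (fun j => x (e.symm j)) with ⟨μ, hμ, hsum⟩ | ⟨w, hw, j, hj⟩
  · refine Or.inl ⟨fun i => μ (e i), fun i => hμ _, ?_⟩
    rw [← hsum]
    exact Fintype.sum_equiv e _ _ (fun i => by rw [Equiv.symm_apply_apply])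
  · exact Or.inr ⟨w, fun i => by simpa using hw (e i), e.symm j, hj⟩

/-- `u` lies in the open convex cone generated by `v₁, …, vₙ`: there are scalars
`μ₁, …, μₙ`, either all strictly positive or all strictly negative, with
`u = ∑ μᵢ • vᵢ`. -/
def memOpenCone {k n : ℕ} (v : Fin n → (Fin k → ℝ)) (u : Fin k → ℝ) : Prop :=
  ∃ μ : Fin n → ℝ, ((∀ i, 0 < μ i) ∨ (∀ i, μ i < 0)) ∧ u = ∑ i, μ i • v i

/-- **Generalized Farkas Lemma.** There exists `w` with `⟨w, vᵢ⟩ ≥ 0` for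
all `i`, at least one of these inner products strictly positive, and `⟨uⱼ, w⟩ = 0` for
all `j`, if and only if no linear combination `∑ⱼ aⱼ • uⱼ` lies in the open convex cone
generated by the `vᵢ`. -/
theorem farkas_open_cone_generalized {k n m : ℕ} (v : Fin n → (Fin k → ℝ))
    (u : Fin m → (Fin k → ℝ)) :
    (∃ w : Fin k → ℝ, (∀ i, 0 ≤ w ⬝ᵥ v i) ∧ (∃ i, 0 < w ⬝ᵥ v i) ∧
        ∀ j, (u j) ⬝ᵥ w = 0) ↔
      ∀ a : Fin m → ℝ, ¬ memOpenCone v (∑ j, a j • u j) := by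

  constructor
  · rintro ⟨w, hnn, ⟨i0, hi0⟩, hu⟩ a ⟨μ, hμ, hsum⟩
    have h1 : w ⬝ᵥ (∑ j, a j • u j) = 0 := by
      rw [myDotSum]
      refine Finset.sum_eq_zero fun j _ => ?_
      rw [dotProduct_smul, smul_eq_mul, dotProduct_comm, hu j, mul_zero]
    rw [hsum, myDotSum] at h1
    simp only [dotProduct_smul, smul_eq_mul] at h1
    rcases hμ with hpos | hneg
    · have : 0 < ∑ i, μ i * (w ⬝ᵥ v i) :=
        Finset.sum_pos' (fun i _ => mul_nonneg (hpos i).le (hnn i))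
          ⟨i0, Finset.mem_univ _, mul_pos (hpos i0) hi0⟩
      linarith
    · have : 0 < ∑ i, -(μ i * (w ⬝ᵥ v i)) :=
        Finset.sum_pos'
          (fun i _ => neg_nonneg.mpr (mul_nonpos_of_nonpos_of_nonneg (hneg i).le (hnn i)))
          ⟨i0, Finset.mem_univ _, by nlinarith [hneg i0, hi0]⟩
      rw [Finset.sum_neg_distrib] at this
      linarith
  · intro h
    rcases myStiemke' (Sum.elim v (Sum.elim u (fun j => -u j))) with
      ⟨μ, hμ, hsum⟩ | ⟨w, hw, s, hs⟩
    · exfalso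
      refine h (fun j => μ (Sum.inr (Sum.inr j)) - μ (Sum.inr (Sum.inl j)))
        ⟨fun i => μ (Sum.inl i), Or.inl (fun i => hμ _), ?_⟩
      rw [Fintype.sum_sum_type, Fintype.sum_sum_type] at hsum
      simp only [Sum.elim_inl, Sum.elim_inr] at hsum
      have h2 : ∑ i, μ (Sum.inl i) • v i =
          ∑ j, μ (Sum.inr (Sum.inr j)) • u j - ∑ j, μ (Sum.inr (Sum.inl j)) • u j := by
        rw [← sub_eq_zero, ← hsum]
        simp only [smul_neg, Finset.sum_neg_distrib]
        abel
      rw [h2, ← Finset.sum_sub_distrib]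
      exact Finset.sum_congr rfl fun j _ => (sub_smul _ _ _)
    · have huw : ∀ j, u j ⬝ᵥ w = 0 := by
        intro j
        have h1 := hw (Sum.inr (Sum.inl j))
        have h2 := hw (Sum.inr (Sum.inr j))
        simp only [Sum.elim_inl, Sum.elim_inr, dotProduct_neg] at h1 h2
        rw [dotProduct_comm]
        linarith
      refine ⟨w, fun i => by simpa using hw (Sum.inl i), ?_, huw⟩
      rcases s with i | s
      · exact ⟨i, by simpa using hs⟩
      · exfalso
        rcases s with j | j <;>
        · simp only [Sum.elim_inl, Sum.elim_inr, dotProduct_neg] at hs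
          have := huw j
          rw [dotProduct_comm] at this
          linarith
end

section
/- Let G be a finite connected simple graph with vertices v₁, …, v_n. An edge valuation f ∈ T(G) is a critical point (maximum) of the weighted tree number τ over T(G) if and only if there exist constants λ₁, …, λ_n such that for every edge e with endpoints v_i and v_j one has τ_e(f) = λ_i + λ_j. -/
/-!
By the weighted matrix-tree theorem (Cauchy–Binet applied to a reduced signed incidence matrix
`B`), `τ_w = det (B diag(w) Bᵀ)`, where the matrix `B diag(w) Bᵀ` depends linearly on `w` and is
positive definite for positive `w` when `G` is connected. As `log det` is concave on positive
definite matrices, `τ` is log-concave on positive valuations, so on the convex set `T(G)` a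
valuation is a maximum exactly when it is a critical point: the gradient `(τ_e(f))_e` vanishes on
all directions with zero vertex sums. These directions form the kernel of the unsigned incidence
matrix, and the linear forms vanishing on that kernel are those of the form `e = vw ↦ λ_v + λ_w`.
-/

open Matrix Finset
open scoped Classical

namespace ExtremalGraphs

variable {V : Type*} [Fintype V] [DecidableEq V] (G : SimpleGraph V) [DecidableRel G.Adj]

/-- `P(G)`: the space of edge valuations: positive weights with total weight `|E(G)|`. -/
def PSpace : Set (G.edgeSet → ℝ) :=
  {f | (∀ e, 0 < f e) ∧ ∑ e, f e = (Fintype.card G.edgeSet : ℝ)}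

/-- `T(G)`: valuations in `P(G)` whose sum over the edges incident to each vertex `v`
equals the degree of `v` in `G`. -/
def TSpace : Set (G.edgeSet → ℝ) :=
  {f | f ∈ PSpace G ∧
    ∀ v : V, (∑ e : G.edgeSet, if v ∈ (e : Sym2 V) then f e else 0) = (G.degree v : ℝ)}

/-- A finite set `t` of edges of `G` is a spanning tree of `G` if the simple graph on
`V` with exactly those edges is a tree (connected, so spanning, and acyclic). -/
def IsSpanningTree (t : Finset G.edgeSet) : Prop :=
  (SimpleGraph.fromEdgeSet ((fun e : G.edgeSet => (e : Sym2 V)) '' ↑t)).IsTree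

/-- The weighted tree number `τ_f(G) = ∑_{T spanning tree of G} ∏_{e ∈ T} f(e)`. -/
noncomputable def tau (f : G.edgeSet → ℝ) : ℝ :=
  ∑ t : Finset G.edgeSet, if IsSpanningTree G t then ∏ e ∈ t, f e else 0

/-- The partial derivative `τ_e(f) = ∂τ/∂f(e)`: the sum over the spanning trees
containing `e` of the product of the weights of their other edges. -/
noncomputable def tauE (e : G.edgeSet) (f : G.edgeSet → ℝ) : ℝ :=
  ∑ t : Finset G.edgeSet, if IsSpanningTree G t ∧ e ∈ t then ∏ e' ∈ t.erase e, f e' else 0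

end ExtremalGraphs

namespace Matrix

section CauchyBinet

variable {R : Type*} [CommRing R] {m n : Type*} [Fintype m] [DecidableEq m]

lemma det_submatrix_eq_zero_of_not_injective (A : Matrix m n R) {φ : m → n}
    (hφ : ¬Function.Injective φ) : (A.submatrix id φ).det = 0 := by
  obtain ⟨i, j, hij, hne⟩ := Function.not_injective_iff.mp hφ
  exact det_zero_of_column_eq hne (by simp [hij])

variable [Fintype n]

-- The columns are enumerated by an arbitrary bijection `m ≃ S`, so `colMinor A S` is only
-- determined up to sign; it is `0` when `S` has the wrong cardinality.
noncomputable def colMinor (A : Matrix m n R) (S : Finset n) : R :=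
  if h : Fintype.card m = S.card then
    (A.submatrix id fun i => (Fintype.equivOfCardEq (h.trans (Fintype.card_coe S).symm) i : n)).det
  else 0

theorem det_mul_eq_sum_fun (A : Matrix m n R) (B : Matrix n m R) :
    (A * B).det = ∑ φ : m → n, (∏ i, B (φ i) i) * (A.submatrix id φ).det := by
  simp only [det_apply', mul_apply, Finset.prod_univ_sum, Fintype.piFinset_univ, Finset.mul_sum,
    submatrix_apply, id, Finset.prod_mul_distrib]
  rw [Finset.sum_comm]
  refine Finset.sum_congr rfl fun φ _ => Finset.sum_congr rfl fun σ _ => ?_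
  ring

variable [DecidableEq n]

lemma sum_fiber_eq_det_mul_det (A : Matrix m n R) (B : Matrix n m R) {S : Finset n}
    (e : m ≃ S) :
    ∑ φ : m → n with Finset.univ.image φ = S, (∏ i, B (φ i) i) * (A.submatrix id φ).det
      = (A.submatrix id fun i => (e i : n)).det * (B.submatrix (fun i => (e i : n)) id).det := by
  rw [mul_comm, det_apply' (B.submatrix _ id), Finset.sum_mul]
  symm
  refine Finset.sum_bij (fun σ _ i => (e (σ i) : n)) ?_ ?_ ?_ ?_
  · intro σ _
    refine Finset.mem_filter.mpr ⟨Finset.mem_univ _, Finset.ext fun x => ?_⟩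
    simp only [Finset.mem_image, Finset.mem_univ, true_and]
    exact ⟨fun ⟨i, hi⟩ => hi ▸ (e (σ i)).2, fun hx => ⟨σ.symm (e.symm ⟨x, hx⟩), by simp⟩⟩
  · intro σ _ τ _ hστ
    ext i
    simpa [Subtype.ext_iff] using congrFun hστ i
  · intro φ hφ
    have hφS := (Finset.mem_filter.mp hφ).2
    have hmem (i : m) : φ i ∈ S := hφS ▸ Finset.mem_image_of_mem φ (Finset.mem_univ i)
    have hinj : Function.Injective φ := by
      have := Finset.card_image_iff.mp (by rw [hφS, Finset.card_univ, Fintype.card_congr e,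
        Fintype.card_coe])
      simpa [Set.injOn_univ] using this
    let ψ : m → S := fun i => ⟨φ i, hmem i⟩
    have hψ : Function.Bijective ψ := (Fintype.bijective_iff_injective_and_card ψ).mpr
      ⟨fun i j hij => hinj (congrArg Subtype.val hij), Fintype.card_congr e⟩
    exact ⟨(Equiv.ofBijective ψ hψ).trans e.symm, Finset.mem_univ _, funext fun i => by simp [ψ]⟩
  · intro σ _
    rw [show (A.submatrix id fun i => (e (σ i) : n))
        = (A.submatrix id fun i => (e i : n)).submatrix id σ from rfl, det_permute']
    simp only [submatrix_apply, id]
    ring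

theorem det_mul_eq_sum_colMinor_mul (A : Matrix m n R) (B : Matrix n m R) :
    (A * B).det = ∑ S : Finset n, colMinor A S * colMinor Bᵀ S := by
  rw [det_mul_eq_sum_fun, ← Finset.sum_fiberwise Finset.univ fun φ : m → n => Finset.univ.image φ]
  refine Finset.sum_congr rfl fun S _ => ?_
  unfold colMinor
  split_ifs with h
  · rw [sum_fiber_eq_det_mul_det, ← transpose_submatrix, det_transpose]
  · refine (Finset.sum_eq_zero fun φ hφ => ?_).trans (zero_mul _).symm
    refine mul_eq_zero_of_right _ (det_submatrix_eq_zero_of_not_injective A fun hinj => h ?_)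
    rw [← (Finset.mem_filter.mp hφ).2, Finset.card_image_of_injective _ hinj, Finset.card_univ]

lemma colMinor_mul_diagonal (A : Matrix m n R) (w : n → R) (S : Finset n) :
    colMinor (A * diagonal w) S = (∏ e ∈ S, w e) * colMinor A S := by
  unfold colMinor
  split_ifs with h
  · set e := Fintype.equivOfCardEq (h.trans (Fintype.card_coe S).symm)
    have : (A * diagonal w).submatrix id (fun i => (e i : n))
        = A.submatrix id (fun i => (e i : n)) * diagonal fun i => w (e i) := by
      ext i j
      simp [mul_diagonal]
    rw [this, det_mul, det_diagonal, mul_comm, ← Finset.prod_coe_sort S w,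
      Equiv.prod_comp e fun x : S => w x]
  · rw [mul_zero]

theorem det_mul_diagonal_mul_transpose (A : Matrix m n R) (w : n → R) :
    (A * diagonal w * Aᵀ).det = ∑ S : Finset n, (∏ e ∈ S, w e) * colMinor A S ^ 2 := by
  rw [Matrix.mul_assoc, det_mul_eq_sum_colMinor_mul, transpose_mul, transpose_transpose,
    diagonal_transpose]
  refine Finset.sum_congr rfl fun S _ => ?_
  rw [colMinor_mul_diagonal]
  ring

end CauchyBinet

theorem exists_vecMul_eq_of_forall_mulVec_eq_zero {K m n : Type*} [Field K] [Fintype m]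
    [Fintype n] [DecidableEq m] [DecidableEq n] (M : Matrix m n K) (y : n → K)
    (h : ∀ x, M *ᵥ x = 0 → y ⬝ᵥ x = 0) : ∃ z, z ᵥ* M = y := by
  let φ : Module.Dual K (n → K) :=
    { toFun := (y ⬝ᵥ ·), map_add' := dotProduct_add y
      map_smul' := fun c x => dotProduct_smul c y x }
  obtain ⟨ψ, hψ⟩ : φ ∈ LinearMap.range M.mulVecLin.dualMap := by
    rw [LinearMap.range_dualMap_eq_dualAnnihilator_ker, Submodule.mem_dualAnnihilator]
    exact fun x hx => h x hx
  refine ⟨fun i => ψ fun k => if i = k then 1 else 0, funext fun j => ?_⟩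
  have := LinearMap.congr_fun hψ (Pi.single j 1)
  rw [LinearMap.dualMap_apply, mulVecLin_apply, mulVec_single_one,
    LinearMap.pi_apply_eq_sum_univ] at this
  simp only [φ, LinearMap.coe_mk, AddHom.coe_mk, dotProduct_single_one, col_apply,
    smul_eq_mul] at this
  rw [← this, vecMul, dotProduct]
  simp only [mul_comm]

section LogDet

variable {n : Type*} [Fintype n] [DecidableEq n]

theorem IsHermitian.det_one_add_smul_sub_one {M : Matrix n n ℝ} (hM : M.IsHermitian) (t : ℝ) :
    (1 + t • (M - 1)).det = ∏ i, (1 + t * (hM.eigenvalues i - 1)) := by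
  set U := hM.eigenvectorUnitary
  have hU : (U : Matrix n n ℝ) * star (U : Matrix n n ℝ) = 1 := Unitary.mul_star_self_of_mem U.2
  have hdiag : (1 : Matrix n n ℝ) + t • (diagonal (RCLike.ofReal ∘ hM.eigenvalues) - 1)
      = diagonal fun i => 1 + t * (hM.eigenvalues i - 1) := by
    ext i j
    by_cases hij : i = j <;> simp [hij]
  conv_lhs => rw [hM.spectral_theorem, ← map_one (Unitary.conjStarAlgAut ℝ _ U), ← map_sub,
    ← map_smul, ← map_add, hdiag, Unitary.conjStarAlgAut_apply, det_mul, det_mul, mul_right_comm,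
    ← det_mul, hU, det_one, one_mul, det_diagonal]

-- Concavity of `log det`: with `A = C²` and `B = C M C`, one has
-- `det (A + t (B - A)) = det A * ∏ (1 + t (ν_i - 1))` for the eigenvalues `ν_i > 0` of `M`,
-- and `ν ≤ exp (ν - 1)`.
theorem PosDef.det_le_mul_exp_of_hasDerivAt {A B : Matrix n n ℝ} (hA : A.PosDef) (hB : B.PosDef)
    {c : ℝ} (h : HasDerivAt (fun t : ℝ => (A + t • (B - A)).det) c 0) :
    B.det ≤ A.det * Real.exp (c / A.det) := by
  obtain ⟨C, hCh, hCC⟩ : ∃ C : Matrix n n ℝ, Cᴴ = C ∧ C * C = A := by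
    open scoped MatrixOrder in
    exact ⟨CFC.sqrt A, (nonneg_iff_posSemidef.mp (CFC.sqrt_nonneg A)).1,
      CFC.sqrt_mul_sqrt_self A hA.posSemidef.nonneg⟩
  have hCu : IsUnit C.det := by
    refine isUnit_iff_ne_zero.mpr fun h0 => hA.det_pos.ne ?_
    rw [← hCC, det_mul, h0, zero_mul]
  set M := C⁻¹ * B * C⁻¹
  have hM : M.PosDef := by
    have hC' : star C⁻¹ = C⁻¹ := by rw [star_eq_conjTranspose, conjTranspose_nonsing_inv, hCh]
    have hCinv : IsUnit C⁻¹ := isUnit_nonsing_inv_iff.mpr ((isUnit_iff_isUnit_det C).mpr hCu)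
    simpa [hC', M] using (IsUnit.posDef_star_left_conjugate_iff (x := B) hCinv).mpr hB
  set ν := hM.1.eigenvalues
  have hdet (t : ℝ) : (A + t • (B - A)).det = A.det * ∏ i, (1 + t * (ν i - 1)) := by
    have hCMC : C * M * C = B := by
      simp only [M, ← Matrix.mul_assoc, mul_nonsing_inv _ hCu, Matrix.one_mul]
      rw [Matrix.mul_assoc, nonsing_inv_mul _ hCu, Matrix.mul_one]
    have : A + t • (B - A) = C * (1 + t • (M - 1)) * C := by
      rw [← hCC, ← hCMC]
      simp only [Matrix.mul_add, Matrix.add_mul, Matrix.mul_one, Matrix.mul_smul,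
        Matrix.smul_mul, Matrix.mul_sub, Matrix.sub_mul]
    rw [this, det_mul, det_mul, mul_right_comm, ← det_mul, hCC, hM.1.det_one_add_smul_sub_one]
  have hc : c = A.det * ∑ i, (ν i - 1) := by
    have hprod := HasDerivAt.fun_finsetProd (u := Finset.univ) (x := (0 : ℝ)) fun i _ =>
      ((hasDerivAt_id (0 : ℝ)).mul_const (ν i - 1)).const_add 1
    refine h.unique ?_
    simpa only [hdet, id, zero_mul, add_zero, Finset.prod_const_one, one_smul, one_mul]
      using hprod.const_mul A.det
  calc B.det = A.det * ∏ i, ν i := by simpa using hdet 1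
    _ ≤ A.det * ∏ i, Real.exp (ν i - 1) := by
      refine mul_le_mul_of_nonneg_left (Finset.prod_le_prod (fun i _ => (hM.eigenvalues_pos i).le)
        fun i _ => ?_) hA.det_pos.le
      linarith [Real.add_one_le_exp (ν i - 1)]
    _ = A.det * Real.exp (c / A.det) := by
      rw [← Real.exp_sum, hc, mul_div_cancel_left₀ _ hA.det_pos.ne']

end LogDet

end Matrix

namespace SimpleGraph

theorem Reachable.apply_eq_of_forall_adj {V β : Type*} {H : SimpleGraph V} {y : V → β}
    (hy : ∀ a b, H.Adj a b → y a = y b) {a b : V} (h : H.Reachable a b) : y a = y b := by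
  obtain ⟨p⟩ := h
  induction p with
  | nil => rfl
  | cons hadj _ ih => exact (hy _ _ hadj).trans ih

end SimpleGraph

namespace Sym2

variable {α : Type*}

lemma mk_out (e : Sym2 α) : s((Quot.out e).1, (Quot.out e).2) = e := Quot.out_eq e

lemma out_mk_eq_or (x y : α) : Quot.out s(x, y) = (x, y) ∨ Quot.out s(x, y) = (y, x) := by
  have h := mk_out s(x, y)
  rw [Sym2.eq_iff] at h
  rcases h with ⟨h1, h2⟩ | ⟨h1, h2⟩
  · exact Or.inl (Prod.ext h1 h2)
  · exact Or.inr (Prod.ext h1 h2)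

end Sym2

namespace ExtremalGraphs

section SignedIncidence

variable {α : Type*} [DecidableEq α]

noncomputable def signedInc (R : Type*) [Ring R] (e : Sym2 α) (v : α) : R :=
  (if v = (Quot.out e).2 then 1 else 0) - (if v = (Quot.out e).1 then 1 else 0)

variable {R : Type*} [Ring R]

lemma cast_signedInc (e : Sym2 α) (v : α) :
    ((signedInc ℤ e v : ℤ) : R) = signedInc R e v := by
  simp only [signedInc, Int.cast_sub, Int.cast_ite, Int.cast_one, Int.cast_zero]

lemma sum_mul_signedInc [Fintype α] (c : α → R) (e : Sym2 α) :
    ∑ v, c v * signedInc R e v = c (Quot.out e).2 - c (Quot.out e).1 := by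
  simp [signedInc, mul_sub, Finset.sum_sub_distrib]

lemma signedInc_mul_signedInc_snd {x y : α} (h : x ≠ y) (u : α) :
    signedInc R s(x, y) u * signedInc R s(x, y) y
      = (if u = y then 1 else 0) - (if u = x then 1 else 0) := by
  rcases Sym2.out_mk_eq_or x y with hxy | hxy <;>
    by_cases hu : u = y <;> by_cases hu' : u = x <;> simp_all [signedInc, h.symm]

variable {H : SimpleGraph α}

-- The net number of traversals of each edge by the walk, counted positively in the direction of
-- the orientation used by `signedInc`.
noncomputable def walkFlow : {a b : α} → H.Walk a b → Sym2 α → ℤ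
  | _, _, .nil => fun _ => 0
  | _, _, .cons (u := x) (v := y) _ p => fun s =>
      (if s = s(x, y) then signedInc ℤ s y else 0) + walkFlow p s

lemma sum_signedInc_mul_walkFlow {a b : α} (p : H.Walk a b) {F : Finset (Sym2 α)}
    (hF : ∀ s ∈ p.edges, s ∈ F) (u : α) :
    ∑ s ∈ F, signedInc ℤ s u * walkFlow p s
      = (if u = b then 1 else 0) - (if u = a then 1 else 0) := by
  induction p with
  | nil => simp [walkFlow]
  | @cons x y b hxy q ih =>
    have hq : ∀ s ∈ q.edges, s ∈ F := fun s hs => hF s (by simp [hs])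
    have hxyF : s(x, y) ∈ F := hF _ (by simp)
    simp only [walkFlow, mul_add, Finset.sum_add_distrib, ih hq, mul_ite, mul_zero,
      Finset.sum_ite_eq', if_pos hxyF, signedInc_mul_signedInc_snd hxy.ne]
    ring

end SignedIncidence

section ReducedIncidence

variable {α : Type*} [Fintype α] [DecidableEq α] {v₀ : α}

lemma sum_subtype_ne_mul_signedInc {R : Type*} [Ring R] {y : α → R} (hy : y v₀ = 0)
    (e : Sym2 α) :
    ∑ u : {u // u ≠ v₀}, y u * signedInc R e u = y (Quot.out e).2 - y (Quot.out e).1 := by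
  rw [← sum_mul_signedInc, Fintype.sum_eq_add_sum_subtype_ne _ v₀, hy, zero_mul, zero_add]

variable (c : {u // u ≠ v₀} → Sym2 α)

-- The inverse matrix records the flows of walks from `v₀` to the other vertices.
theorem isUnit_det_signedInc_of_connected (hc : Function.Injective c)
    (hconn : (SimpleGraph.fromEdgeSet (Set.range c)).Connected) :
    IsUnit (Matrix.of fun (u j : {u // u ≠ v₀}) => signedInc ℤ (c j) (u : α)).det := by
  set H := SimpleGraph.fromEdgeSet (Set.range c)
  let walk (v : α) : H.Walk v₀ v := (hconn.preconnected v₀ v).some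
  have hedges {v : α} : ∀ s ∈ (walk v).edges, s ∈ Finset.univ.image c := by
    intro s hs
    obtain ⟨⟨j, rfl⟩, -⟩ := SimpleGraph.edgeSet_fromEdgeSet _ ▸ (walk v).edges_subset_edgeSet hs
    exact Finset.mem_image_of_mem c (Finset.mem_univ j)
  let Q : Matrix {u // u ≠ v₀} {u // u ≠ v₀} ℤ := .of fun j u => walkFlow (walk u) (c j)
  refine IsUnit.of_mul_eq_one Q.det ?_
  suffices h : (Matrix.of fun (u j : {u // u ≠ v₀}) => signedInc ℤ (c j) (u : α)) * Q = 1 by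
    rw [← det_mul, h, det_one]
  ext u u'
  rw [Matrix.mul_apply, Matrix.one_apply]
  simp only [Matrix.of_apply, Q]
  rw [← Finset.sum_image (f := fun s => signedInc ℤ s (u : α) * walkFlow (walk u') s)
    hc.injOn, sum_signedInc_mul_walkFlow _ hedges, if_neg u.2, sub_zero]
  simp [Subtype.ext_iff]

-- The indicator of the vertices that cannot be reached from `v₀` is a left null vector.
theorem det_signedInc_eq_zero_of_not_connected
    (hconn : ¬(SimpleGraph.fromEdgeSet (Set.range c)).Connected) :
    (Matrix.of fun (u j : {u // u ≠ v₀}) => signedInc ℤ (c j) (u : α)).det = 0 := by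
  set H := SimpleGraph.fromEdgeSet (Set.range c)
  obtain ⟨v₁, hv₁⟩ : ∃ v₁, ¬H.Reachable v₀ v₁ := by
    by_contra! h
    exact hconn ((SimpleGraph.connected_iff _).mpr
      ⟨fun a b => (h a).symm.trans (h b), ⟨v₀⟩⟩)
  let x (v : α) : ℤ := if H.Reachable v₀ v then 0 else 1
  have hx_ends (j) : x (Quot.out (c j)).2 = x (Quot.out (c j)).1 := by
    by_cases hdiag : (Quot.out (c j)).1 = (Quot.out (c j)).2
    · rw [hdiag]
    have hadj : H.Adj (Quot.out (c j)).1 (Quot.out (c j)).2 := by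
      rw [SimpleGraph.fromEdgeSet_adj, Sym2.mk_out]
      exact ⟨⟨j, rfl⟩, hdiag⟩
    have hiff : H.Reachable v₀ (Quot.out (c j)).2 ↔ H.Reachable v₀ (Quot.out (c j)).1 :=
      ⟨fun h => h.trans hadj.reachable.symm, fun h => h.trans hadj.reachable⟩
    simp only [x, hiff]
  refine Matrix.exists_vecMul_eq_zero_iff.mp ⟨fun u => x u, ?_, ?_⟩
  · intro h
    have := congrFun h ⟨v₁, fun h => hv₁ (h ▸ .rfl)⟩
    simp [x, hv₁] at this
  · ext j
    simpa [vecMul, dotProduct, hx_ends] using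
      sum_subtype_ne_mul_signedInc (y := x) (by simp [x]) (c j)

end ReducedIncidence

section MatrixTree

variable {V : Type*} (G : SimpleGraph V)

lemma edgeSet_fromEdgeSet_image (S : Set G.edgeSet) :
    (SimpleGraph.fromEdgeSet (((↑) : G.edgeSet → Sym2 V) '' S)).edgeSet = (↑) '' S := by
  rw [SimpleGraph.edgeSet_fromEdgeSet, sdiff_eq_left, Set.disjoint_left]
  rintro _ ⟨e, -, rfl⟩
  exact G.not_isDiag_of_mem_edgeSet e.2

variable [Fintype V]

lemma isSpanningTree_iff (S : Finset G.edgeSet) :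
    IsSpanningTree G S ↔
      (SimpleGraph.fromEdgeSet (((↑) : G.edgeSet → Sym2 V) '' S)).Connected ∧
        S.card + 1 = Fintype.card V := by
  rw [IsSpanningTree, SimpleGraph.isTree_iff_connected_and_card, edgeSet_fromEdgeSet_image,
    Nat.card_image_of_injective Subtype.val_injective, Nat.card_coe_set_eq, Set.ncard_coe_finset,
    Nat.card_eq_fintype_card]

variable [DecidableEq V]

noncomputable def reducedIncidence (v₀ : V) : Matrix {u // u ≠ v₀} G.edgeSet ℝ :=
  .of fun u e => signedInc ℝ (e : Sym2 V) u

lemma injective_vecMul_reducedIncidence (hG : G.Connected) (v₀ : V) :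
    Function.Injective (reducedIncidence G v₀).vecMul := by
  rw [← Matrix.coe_vecMulLinear, ← LinearMap.ker_eq_bot, LinearMap.ker_eq_bot']
  intro x hx
  let y (v : V) : ℝ := if h : v = v₀ then 0 else x ⟨v, h⟩
  have hy : ∀ e : G.edgeSet, y (Quot.out (e : Sym2 V)).2 = y (Quot.out (e : Sym2 V)).1 := by
    intro e
    have hxy (u : {u // u ≠ v₀}) : y u = x u := dif_neg u.2
    have h := sum_subtype_ne_mul_signedInc (v₀ := v₀) (y := y) (by simp [y]) (e : Sym2 V)
    simp only [hxy] at h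
    rw [← sub_eq_zero, ← h]
    simpa [reducedIncidence, vecMul, dotProduct] using congrFun hx e
  have hadj (a b : V) (hab : G.Adj a b) : y a = y b := by
    have := hy ⟨s(a, b), hab⟩
    rcases Sym2.out_mk_eq_or a b with h | h <;> simp only [h] at this
    exacts [this.symm, this]
  funext u
  have := (hG.preconnected u v₀).apply_eq_of_forall_adj hadj
  simpa [y, u.2] using this

lemma colMinor_reducedIncidence_sq (v₀ : V) (S : Finset G.edgeSet) :
    (reducedIncidence G v₀).colMinor S ^ 2 = if IsSpanningTree G S then 1 else 0 := by
  have hcard : Fintype.card {u // u ≠ v₀} + 1 = Fintype.card V := by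
    have := Fintype.card_pos_iff.mpr ⟨v₀⟩
    simp only [ne_eq, Fintype.card_subtype_compl, Fintype.card_unique]
    omega
  unfold Matrix.colMinor
  by_cases h : Fintype.card {u // u ≠ v₀} = S.card
  · rw [dif_pos h]
    set e := Fintype.equivOfCardEq (h.trans (Fintype.card_coe S).symm)
    let c (j : {u // u ≠ v₀}) : Sym2 V := ((e j : G.edgeSet) : Sym2 V)
    have hc : Function.Injective c := fun i j hij => e.injective (Subtype.ext (Subtype.ext hij))
    have hrange : Set.range c = ((↑) : G.edgeSet → Sym2 V) '' S := by
      ext x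
      constructor
      · rintro ⟨j, rfl⟩
        exact ⟨e j, (e j).2, rfl⟩
      · rintro ⟨y, hy, rfl⟩
        exact ⟨e.symm ⟨y, hy⟩, by simp [c]⟩
    have hsub : (reducedIncidence G v₀).submatrix id (fun j => (e j : G.edgeSet))
        = (Matrix.of fun (u j : {u // u ≠ v₀}) => signedInc ℤ (c j) (u : V)).map (↑) := by
      ext u j
      simp [reducedIncidence, c, cast_signedInc]
    have htree : IsSpanningTree G S ↔ (SimpleGraph.fromEdgeSet (Set.range c)).Connected := by
      rw [isSpanningTree_iff, hrange, and_iff_left (by omega)]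
    rw [hsub, ← Int.cast_det, ← Int.cast_pow]
    split_ifs with hT
    · rw [Int.isUnit_sq (isUnit_det_signedInc_of_connected c hc (htree.mp hT)), Int.cast_one]
    · rw [det_signedInc_eq_zero_of_not_connected c (htree.not.mp hT)]
      simp
  · rw [dif_neg h, if_neg fun hS => h (by have := ((isSpanningTree_iff G S).mp hS).2; omega)]
    simp

variable [DecidableRel G.Adj]

noncomputable def reducedLaplacian (v₀ : V) (w : G.edgeSet → ℝ) :
    Matrix {u // u ≠ v₀} {u // u ≠ v₀} ℝ :=
  reducedIncidence G v₀ * Matrix.diagonal w * (reducedIncidence G v₀)ᵀ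

theorem tau_eq_det_reducedLaplacian (v₀ : V) (w : G.edgeSet → ℝ) :
    tau G w = (reducedLaplacian G v₀ w).det := by
  rw [reducedLaplacian, Matrix.det_mul_diagonal_mul_transpose, tau]
  refine Finset.sum_congr rfl fun S _ => ?_
  rw [colMinor_reducedIncidence_sq]
  split_ifs <;> simp

lemma reducedLaplacian_add_smul_sub (v₀ : V) (f g : G.edgeSet → ℝ) (t : ℝ) :
    reducedLaplacian G v₀ (f + t • (g - f))
      = reducedLaplacian G v₀ f + t • (reducedLaplacian G v₀ g - reducedLaplacian G v₀ f) := by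
  have : Matrix.diagonal (f + t • (g - f))
      = Matrix.diagonal f + t • (Matrix.diagonal g - Matrix.diagonal f) := by
    ext i j
    by_cases h : i = j <;> simp [h]
  simp only [reducedLaplacian, this, Matrix.mul_add, Matrix.add_mul, Matrix.mul_smul,
    Matrix.smul_mul, Matrix.mul_sub, Matrix.sub_mul]

theorem posDef_reducedLaplacian (hG : G.Connected) (v₀ : V) {w : G.edgeSet → ℝ}
    (hw : ∀ e, 0 < w e) : (reducedLaplacian G v₀ w).PosDef := by
  have := (Matrix.PosDef.diagonal hw).mul_mul_conjTranspose_same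
    (injective_vecMul_reducedIncidence G hG v₀)
  rwa [Matrix.conjTranspose_eq_transpose_of_trivial] at this

theorem hasDerivAt_tau_add_smul (x d : G.edgeSet → ℝ) :
    HasDerivAt (fun t : ℝ => tau G (x + t • d)) ((fun e => tauE G e x) ⬝ᵥ d) 0 := by
  have hterm (S : Finset G.edgeSet) : HasDerivAt (fun t : ℝ => ∏ e ∈ S, (x + t • d) e)
      (∑ e ∈ S, (∏ e' ∈ S.erase e, x e') * d e) 0 := by
    simpa using HasDerivAt.fun_finsetProd (u := S) (x := 0) fun e _ =>
      ((hasDerivAt_id (0 : ℝ)).mul_const (d e)).const_add (x e)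
  have := HasDerivAt.fun_sum (u := Finset.univ) (x := (0 : ℝ)) fun S _ =>
    (show HasDerivAt (fun t : ℝ => if IsSpanningTree G S then ∏ e ∈ S, (x + t • d) e else 0)
      (if IsSpanningTree G S then ∑ e ∈ S, (∏ e' ∈ S.erase e, x e') * d e else 0) 0 by
        split_ifs
        exacts [hterm S, hasDerivAt_const _ _])
  refine (this : HasDerivAt (fun t : ℝ => tau G (x + t • d)) _ 0).congr_deriv ?_
  symm
  simp only [dotProduct, tauE, Finset.sum_mul, ite_mul, zero_mul]
  rw [Finset.sum_comm]
  refine Finset.sum_congr rfl fun S _ => ?_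
  by_cases hS : IsSpanningTree G S <;> simp [hS, Finset.sum_ite_mem]

theorem tau_le_of_dotProduct_tauE_eq_zero (hG : G.Connected) {f g : G.edgeSet → ℝ}
    (hf : ∀ e, 0 < f e) (hg : ∀ e, 0 < g e) (h : (fun e => tauE G e f) ⬝ᵥ (g - f) = 0) :
    tau G g ≤ tau G f := by
  obtain ⟨v₀⟩ := hG.nonempty
  have hderiv := hasDerivAt_tau_add_smul G f (g - f)
  simp only [tau_eq_det_reducedLaplacian G v₀, reducedLaplacian_add_smul_sub, h] at hderiv
  have := (posDef_reducedLaplacian G hG v₀ hf).det_le_mul_exp_of_hasDerivAt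
    (posDef_reducedLaplacian G hG v₀ hg) hderiv
  rwa [zero_div, Real.exp_zero, mul_one, ← tau_eq_det_reducedLaplacian,
    ← tau_eq_det_reducedLaplacian] at this

end MatrixTree

variable {V : Type*} [Fintype V] [DecidableEq V] (G : SimpleGraph V)

noncomputable def incidence : Matrix V G.edgeSet ℝ :=
  .of fun v e => if v ∈ (e : Sym2 V) then 1 else 0

lemma vecMul_incidence_mk (lam : V → ℝ) {v w : V} (h : G.Adj v w) :
    (lam ᵥ* incidence G) ⟨s(v, w), G.mem_edgeSet.mpr h⟩ = lam v + lam w := by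
  simp only [incidence, Matrix.vecMul, dotProduct, Matrix.of_apply, mul_ite, mul_one, mul_zero,
    ← Finset.sum_filter]
  rw [show Finset.univ.filter (· ∈ s(v, w)) = {v, w} by ext; simp, Finset.sum_pair h.ne]

lemma exists_adj_eq_add_iff (y : G.edgeSet → ℝ) :
    (∃ lam : V → ℝ, ∀ (v w : V) (h : G.Adj v w), y ⟨s(v, w), G.mem_edgeSet.mpr h⟩ = lam v + lam w)
      ↔ ∃ lam : V → ℝ, lam ᵥ* incidence G = y := by
  refine exists_congr fun lam => ⟨fun h => funext fun ⟨e, he⟩ => ?_, fun h v w hvw => ?_⟩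
  · induction e using Sym2.ind with
    | _ v w => exact (vecMul_incidence_mk G lam he).trans (h v w he).symm
  · rw [← h, vecMul_incidence_mk G lam hvw]

variable [DecidableRel G.Adj]

lemma sum_incidence_mulVec (d : G.edgeSet → ℝ) : ∑ v, (incidence G *ᵥ d) v = 2 * ∑ e, d e := by
  have h2 : (fun _ => 1 : V → ℝ) ᵥ* incidence G = fun _ => 2 := by
    funext ⟨e, he⟩
    induction e using Sym2.ind with
    | _ v w =>
      rw [vecMul_incidence_mk G _ he]
      norm_num
  calc ∑ v, (incidence G *ᵥ d) v = (fun _ => 1) ⬝ᵥ (incidence G *ᵥ d) := by simp [dotProduct]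
    _ = (fun _ => 2) ⬝ᵥ d := by rw [Matrix.dotProduct_mulVec, h2]
    _ = 2 * ∑ e, d e := by simp [dotProduct, Finset.mul_sum]

lemma mem_TSpace_iff (f : G.edgeSet → ℝ) :
    f ∈ TSpace G ↔ (∀ e, 0 < f e) ∧ ∑ e, f e = Fintype.card G.edgeSet ∧
      incidence G *ᵥ f = fun v => (G.degree v : ℝ) := by
  simp [TSpace, PSpace, funext_iff, incidence, Matrix.mulVec, dotProduct, and_assoc]

lemma eventually_add_smul_mem_TSpace {f d : G.edgeSet → ℝ} (hf : f ∈ TSpace G)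
    (hd : incidence G *ᵥ d = 0) : ∀ᶠ t in nhds (0 : ℝ), f + t • d ∈ TSpace G := by
  obtain ⟨hpos, hsum, hdeg⟩ := (mem_TSpace_iff G f).mp hf
  have hdsum : ∑ e, d e = 0 := by
    have := sum_incidence_mulVec G d
    simp only [hd, Pi.zero_apply, Finset.sum_const_zero] at this
    linarith
  have hpos_ev : ∀ᶠ t in nhds (0 : ℝ), ∀ e, 0 < (f + t • d) e := by
    refine Filter.eventually_all.mpr fun e => ?_
    have : Filter.Tendsto (fun t : ℝ => f e + t * d e) (nhds 0) (nhds (f e)) :=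
      (show Continuous fun t : ℝ => f e + t * d e by fun_prop).tendsto' 0 (f e) (by simp)
    simpa using this.eventually_const_lt (hpos e)
  filter_upwards [hpos_ev] with t ht
  refine (mem_TSpace_iff G _).mpr ⟨ht, ?_, ?_⟩
  · simp [Finset.sum_add_distrib, ← Finset.mul_sum, hdsum, hsum]
  · rw [Matrix.mulVec_add, Matrix.mulVec_smul, hd, smul_zero, add_zero, hdeg]

theorem dotProduct_tauE_eq_zero_of_isMaxOn {f d : G.edgeSet → ℝ} (hf : f ∈ TSpace G)
    (hmax : IsMaxOn (tau G) (TSpace G) f) (hd : incidence G *ᵥ d = 0) :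
    (fun e => tauE G e f) ⬝ᵥ d = 0 := by
  have hloc : IsLocalMax (fun t : ℝ => tau G (f + t • d)) 0 := by
    filter_upwards [eventually_add_smul_mem_TSpace G hf hd] with t ht
    simpa using hmax ht
  exact hloc.hasDerivAt_eq_zero (hasDerivAt_tau_add_smul G f d)

/-- A valuation `f ∈ T(G)` is the maximum of the weighted tree number
`τ` over `T(G)` if and only if there exist constants `λ_v`, `v ∈ V(G)`, such that for
every edge `e = v w` one has `τ_e(f) = λ_v + λ_w`. -/
theorem tau_max_T_iff (hG : G.Connected) (f : G.edgeSet → ℝ) (hf : f ∈ TSpace G) :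
    (∀ g ∈ TSpace G, tau G g ≤ tau G f) ↔
      ∃ lam : V → ℝ, ∀ (v w : V) (h : G.Adj v w),
        tauE G ⟨s(v, w), G.mem_edgeSet.mpr h⟩ f = lam v + lam w := by
  refine Iff.trans ?_ (exists_adj_eq_add_iff G fun e => tauE G e f).symm
  constructor
  · intro hmax
    exact (incidence G).exists_vecMul_eq_of_forall_mulVec_eq_zero _ fun d hd =>
      dotProduct_tauE_eq_zero_of_isMaxOn G hf (isMaxOn_iff.mpr hmax) hd
  · rintro ⟨lam, hlam⟩ g hg
    obtain ⟨hf_pos, -, hf_deg⟩ := (mem_TSpace_iff G f).mp hf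
    obtain ⟨hg_pos, -, hg_deg⟩ := (mem_TSpace_iff G g).mp hg
    refine tau_le_of_dotProduct_tauE_eq_zero G hG hf_pos hg_pos ?_
    rw [← hlam, ← dotProduct_mulVec, mulVec_sub, hg_deg, hf_deg, sub_self, dotProduct_zero]

end ExtremalGraphs
end

section
/- Let G be a finite connected simple graph, and for a vertex v set d_T(v) = ∑_{T spanning tree of G} deg_T(v), the sum over all spanning trees T of the degree of v in T. If the constant edge valuation (f ≡ 1) maximizes the weighted tree number τ over C(G), then the ratio d_T(v)/deg(v) is the same for all vertices v of G. -/
/-!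
Perturb the vertex function `g ≡ 1/2`, which induces `f ≡ 1`, along a direction `k` with
`∑ᵤ k(u) deg(u) = 0`: the induced valuations `f_t(vw) = 1 + t (k(v) + k(w))` keep total weight
`|E(G)|` and stay positive for small `t`, so they lie in `C(G)` and `t = 0` is a local maximum
of `t ↦ τ_{f_t}(G)`. Its derivative there is `∑_T ∑_{e ∈ T} (k(v) + k(w)) = ∑ᵤ k(u) d_T(u)`,
which therefore vanishes. The direction `k = deg(w) δ_v - deg(v) δ_w` gives
`deg(w) d_T(v) = deg(v) d_T(w)`.
-/

open Matrix Finset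
open scoped Classical

namespace ExtremalGraphs

variable {V : Type*} [Fintype V] [DecidableEq V] (G : SimpleGraph V) [DecidableRel G.Adj]

/-- `C(G)`: valuations in `P(G)` of the form `f(vw) = g(v) + g(w)` for a positive
vertex function `g`. -/
def CSpace : Set (G.edgeSet → ℝ) :=
  {f | f ∈ PSpace G ∧
    ∃ g : V → ℝ, (∀ v, 0 < g v) ∧
      ∀ (v w : V) (h : G.Adj v w), f ⟨s(v, w), G.mem_edgeSet.mpr h⟩ = g v + g w}

/-- `d_T(v)`: the sum, over all spanning trees `T` of `G`, of the degree of `v` in `T`. -/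
noncomputable def dT (v : V) : ℕ :=
  ∑ t : Finset G.edgeSet,
    if IsSpanningTree G t then (t.filter fun e => v ∈ (e : Sym2 V)).card else 0

noncomputable def edgeVal (k : V → ℝ) : G.edgeSet → ℝ :=
  fun e => Sym2.lift ⟨fun a b => k a + k b, fun _ _ => add_comm _ _⟩ e

omit [Fintype V] [DecidableEq V] [DecidableRel G.Adj] in
@[simp]
lemma edgeVal_mk (k : V → ℝ) {a b : V} (h : s(a, b) ∈ G.edgeSet) :
    edgeVal G k ⟨s(a, b), h⟩ = k a + k b := rfl

omit [Fintype V] [DecidableEq V] [DecidableRel G.Adj] in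
lemma edgeVal_pos {k : V → ℝ} (hk : ∀ u, 0 < k u) (e : G.edgeSet) : 0 < edgeVal G k e := by
  obtain ⟨e, he⟩ := e
  induction e using Sym2.ind with
  | _ a b => exact add_pos (hk a) (hk b)

omit [Fintype V] [DecidableEq V] [DecidableRel G.Adj] in
lemma edgeVal_half_add_mul (k : V → ℝ) (t : ℝ) :
    edgeVal G (fun u => 1 / 2 + t * k u) = fun e => 1 + t * edgeVal G k e := by
  funext ⟨e, he⟩
  induction e using Sym2.ind with
  | _ a b => simp only [edgeVal_mk]; ring

omit [DecidableRel G.Adj] in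
lemma edgeVal_eq_sum (k : V → ℝ) (e : G.edgeSet) :
    edgeVal G k e = ∑ u, if u ∈ (e : Sym2 V) then k u else 0 := by
  obtain ⟨e, he⟩ := e
  induction e using Sym2.ind with
  | _ a b =>
    have hab : a ≠ b := G.ne_of_adj he
    have hmem : ∀ u, u ∈ s(a, b) ↔ u ∈ ({a, b} : Finset V) := by simp
    simp only [hmem, sum_ite_mem, univ_inter, sum_pair hab, edgeVal_mk]

omit [DecidableRel G.Adj] in
lemma sum_edgeVal (k : V → ℝ) (s : Finset G.edgeSet) :
    ∑ e ∈ s, edgeVal G k e = ∑ u, k u * #(s.filter fun e : G.edgeSet => u ∈ (e : Sym2 V)) := by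
  simp only [edgeVal_eq_sum]
  rw [sum_comm]
  refine sum_congr rfl fun u _ => ?_
  rw [← sum_filter, sum_const, nsmul_eq_mul, mul_comm]

lemma card_filter_mem_eq_degree (u : V) :
    #(univ.filter fun e : G.edgeSet => u ∈ (e : Sym2 V)) = G.degree u := by
  rw [← Fintype.card_subtype, ← G.card_incidenceSet_eq_degree]
  exact Fintype.card_congr
    { toFun := fun e => ⟨e.1.1, e.1.2, e.2⟩
      invFun := fun e => ⟨⟨e.1, e.2.1⟩, e.2.2⟩ }

lemma sum_edgeVal_univ (k : V → ℝ) : ∑ e, edgeVal G k e = ∑ u, k u * G.degree u := by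
  simp only [sum_edgeVal, card_filter_mem_eq_degree]

omit [DecidableEq V] in
lemma edgeVal_mem_CSpace {k : V → ℝ} (hk : ∀ u, 0 < k u)
    (hsum : ∑ e, edgeVal G k e = Fintype.card G.edgeSet) : edgeVal G k ∈ CSpace G :=
  ⟨⟨edgeVal_pos G hk, hsum⟩, k, hk, fun _ _ _ => rfl⟩

-- The filter in `dT` runs over `t` coerced to `Finset (Sym2 V)`, i.e. over its image.
omit [Fintype V] [DecidableRel G.Adj] in
lemma card_filter_coe_mem (u : V) (t : Finset G.edgeSet) :
    #((t : Finset (Sym2 V)).filter fun e => u ∈ e)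
      = #(t.filter fun e : G.edgeSet => u ∈ (e : Sym2 V)) := by
  have h1 : (t : Finset (Sym2 V)) = t.image (fun e : G.edgeSet => (e : Sym2 V)) := by
    ext x; simp [Finset.image, Bind.bind]
  rw [h1, filter_image, card_image_of_injective _ Subtype.val_injective]

open Filter Topology

lemma hasDerivAt_tau_one_add_mul (c : G.edgeSet → ℝ) :
    HasDerivAt (fun t => tau G fun e => 1 + t * c e)
      (∑ T, if IsSpanningTree G T then ∑ e ∈ T, c e else 0) 0 := by
  refine HasDerivAt.fun_sum fun T _ => ?_
  split_ifs
  · simpa using HasDerivAt.fun_finsetProd (u := T) (x := (0 : ℝ))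
      fun e _ => (hasDerivAt_mul_const (c e)).const_add 1
  · exact hasDerivAt_const 0 0

lemma sum_spanningTree_sum_edgeVal (k : V → ℝ) :
    ∑ T, (if IsSpanningTree G T then ∑ e ∈ T, edgeVal G k e else 0) = ∑ u, k u * dT G u := by
  simp only [dT, Nat.cast_sum, Nat.cast_ite, Nat.cast_zero, mul_sum, sum_edgeVal,
    mul_ite, mul_zero, card_filter_coe_mem]
  rw [sum_comm]
  exact sum_congr rfl fun T _ => by split_ifs <;> simp

lemma eventually_mem_CSpace {k : V → ℝ} (hk : ∑ u, k u * G.degree u = 0) :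
    ∀ᶠ t in 𝓝 (0 : ℝ), edgeVal G (fun u => 1 / 2 + t * k u) ∈ CSpace G := by
  have hpos : ∀ᶠ t in 𝓝 (0 : ℝ), ∀ u, 0 < 1 / 2 + t * k u := by
    refine eventually_all.2 fun u => ?_
    have : Continuous fun t : ℝ => 1 / 2 + t * k u := by fun_prop
    exact this.continuousAt.eventually (lt_mem_nhds (by norm_num))
  filter_upwards [hpos] with t ht
  refine edgeVal_mem_CSpace G ht ?_
  rw [edgeVal_half_add_mul]
  simp [sum_add_distrib, ← mul_sum, sum_edgeVal_univ, hk]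

theorem sum_mul_dT_eq_zero (hmax : ∀ f ∈ CSpace G, tau G f ≤ tau G fun _ => 1)
    {k : V → ℝ} (hk : ∑ u, k u * G.degree u = 0) : ∑ u, k u * dT G u = 0 := by
  have hloc : IsLocalMax (fun t => tau G fun e => 1 + t * edgeVal G k e) 0 := by
    filter_upwards [eventually_mem_CSpace G hk] with t ht
    simp only [zero_mul, add_zero]
    rw [← edgeVal_half_add_mul]
    exact hmax _ ht
  rw [← sum_spanningTree_sum_edgeVal]
  exact hloc.hasDerivAt_eq_zero (hasDerivAt_tau_one_add_mul G _)

theorem dT_deg_ratio_constant (hG : G.Connected)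
    (hmax : ∀ g ∈ CSpace G, tau G g ≤ tau G (fun _ => (1 : ℝ))) :
    ∀ v w : V, (dT G v : ℝ) / (G.degree v : ℝ) = (dT G w : ℝ) / (G.degree w : ℝ) := by
  intro v w
  rcases eq_or_ne v w with rfl | hvw
  · rfl
  have hv : (0 : ℝ) < G.degree v := mod_cast (hG.preconnected v w).degree_pos_left hvw
  have hw : (0 : ℝ) < G.degree w := mod_cast (hG.preconnected w v).degree_pos_left hvw.symm
  have key := sum_mul_dT_eq_zero G hmax
    (k := Pi.single v (G.degree w : ℝ) - Pi.single w (G.degree v : ℝ))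
    (by simp [sub_mul, sum_sub_distrib, Pi.single_apply, mul_comm])
  simp only [Pi.sub_apply, sub_mul, sum_sub_distrib, Pi.single_apply, ite_mul, zero_mul,
    sum_ite_eq', mem_univ, if_true] at key
  rw [div_eq_div_iff hv.ne' hw.ne']
  linarith

end ExtremalGraphs
end

section
/- Let G be a finite connected simple graph, S an affine subspace of edge valuations containing a valuation f with all weights positive, and E_{λ₁} the eigenspace of the smallest nonzero eigenvalue λ₁ of the weighted Laplacian Δ_f. Then f maximizes λ₁ over S if and only if for every nonzero infinitesimal variation Q in the tangent space of S, the quadratic form given by the induced variation Q_Δ of the Laplacian, restricted to E_{λ₁}, is indefinite (i.e. is neither positive definite nor negative definite on E_{λ₁}). -/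
open Matrix Finset
open scoped Classical

namespace ExtremalGraphs

variable {V : Type*} [Fintype V] [DecidableEq V] (G : SimpleGraph V) [DecidableRel G.Adj]

/-- The elementary Laplacian `Q_e` of an edge `e`: entries `1` at the two diagonal
positions of its endpoints, `-1` at the two off-diagonal positions, `0` elsewhere. -/
def elemLap (e : G.edgeSet) : Matrix V V ℝ := fun v w =>
  if v = w then (if v ∈ (e : Sym2 V) then 1 else 0)
  else (if (e : Sym2 V) = s(v, w) then -1 else 0)

/-- The weighted Laplacian of the valuation `f` : `Δ_f = ∑_e f(e) • Q_e`. -/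
noncomputable def wLap (f : G.edgeSet → ℝ) : Matrix V V ℝ :=
  ∑ e : G.edgeSet, f e • elemLap G e

/-- The smallest nonzero eigenvalue `λ₁(f)` of the weighted Laplacian, given by the
Rayleigh–Ritz quotient over nonzero mean-zero vectors. -/
noncomputable def lambda1 (f : G.edgeSet → ℝ) : ℝ :=
  sInf {r | ∃ x : V → ℝ, x ≠ 0 ∧ (∑ v, x v) = 0 ∧
    r = (x ⬝ᵥ (wLap G f) *ᵥ x) / (x ⬝ᵥ x)}

/-- The eigenspace `E_{λ₁}` of `λ₁(f)` for the weighted Laplacian `Δ_f`. -/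
noncomputable def EigOne (f : G.edgeSet → ℝ) : Set (V → ℝ) :=
  {x | (wLap G f) *ᵥ x = lambda1 G f • x}

end ExtremalGraphs

/-!
`λ₁(g)` is the minimum of the Rayleigh quotient of `Δ_g` over nonzero mean-zero vectors, and
this quotient is affine in `g`. For connected `G` and positive `f` we have `λ₁(f) > 0`, so
`E_{λ₁}` consists of mean-zero vectors, and its nonzero elements are exactly the minimisers.

If some `g = f + Q ∈ S` has `λ₁(g) > λ₁(f)`, evaluating the quotient of `Δ_g` at `x ∈ E_{λ₁}`
gives `λ₁(f) + ⟨x, Q_Δ x⟩ / ⟨x, x⟩ ≥ λ₁(g)`, so `Q_Δ` is positive definite on `E_{λ₁}`.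
Conversely, if `Q_Δ` is positive definite on `E_{λ₁}`, then on the compact unit sphere of
mean-zero vectors the quotient of `Δ_f` exceeds `λ₁(f)` by a fixed margin wherever
`⟨x, Q_Δ x⟩ ≤ 0`; hence `λ₁(f + t Q) > λ₁(f)` for small `t > 0`. Negative definiteness is the
case `-Q`.
-/

lemma IsCompact.exists_pos_forall_lt_add_mul {X : Type*} [TopologicalSpace X]
    [T2Space X] {K : Set X} (hK : IsCompact K) {φ ψ : X → ℝ} (hφ : ContinuousOn φ K)
    (hψ : ContinuousOn ψ K) {m : ℝ} (hm : ∀ y ∈ K, m ≤ φ y)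
    (hψ_pos : ∀ y ∈ K, φ y = m → 0 < ψ y) :
    ∃ t > 0, ∀ y ∈ K, m < φ y + t * ψ y := by
  set C := K ∩ ψ ⁻¹' Set.Iic 0
  rcases C.eq_empty_or_nonempty with hC | hC
  · refine ⟨1, one_pos, fun y hy => ?_⟩
    have : 0 < ψ y := not_le.mp fun h => hC.subset ⟨hy, h⟩
    linarith [hm y hy]
  have hCc : IsCompact C :=
    hK.of_isClosed_subset (hψ.preimage_isClosed_of_isClosed hK.isClosed isClosed_Iic)
      Set.inter_subset_left
  obtain ⟨z, ⟨hzK, hzψ⟩, hz⟩ := hCc.exists_isMinOn hC (hφ.mono Set.inter_subset_left)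
  have hδ : 0 < φ z - m :=
    sub_pos.mpr <| (hm z hzK).lt_of_ne fun h => (hψ_pos z hzK h.symm).not_ge hzψ
  obtain ⟨B, hB⟩ := hK.exists_bound_of_continuousOn hψ
  have hB0 : 0 ≤ B := (norm_nonneg _).trans (hB z hzK)
  set t := (φ z - m) / (B + 1)
  have ht : 0 < t := by positivity
  refine ⟨t, ht, fun y hy => ?_⟩
  rcases le_or_gt (ψ y) 0 with hψy | hψy
  · have hφy : φ z ≤ φ y := hz ⟨hy, hψy⟩
    have htψ : -(t * B) ≤ t * ψ y := by
      simpa using mul_le_mul_of_nonneg_left (neg_le_of_abs_le (hB y hy)) ht.le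
    have htB : t * B < φ z - m := by
      rw [div_mul_eq_mul_div, div_lt_iff₀ (by positivity)]; nlinarith
    linarith
  · nlinarith [hm y hy]

namespace Matrix

variable {n : Type*} [Fintype n]

noncomputable def rayleigh (M : Matrix n n ℝ) (x : n → ℝ) : ℝ := (x ⬝ᵥ M *ᵥ x) / (x ⬝ᵥ x)

lemma dotProduct_self_pos {x : n → ℝ} (hx : x ≠ 0) : 0 < x ⬝ᵥ x := by
  simpa using dotProduct_star_self_pos_iff.mpr hx

lemma rayleigh_pos_iff (M : Matrix n n ℝ) {x : n → ℝ} (hx : x ≠ 0) :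
    0 < rayleigh M x ↔ 0 < x ⬝ᵥ M *ᵥ x :=
  div_pos_iff_of_pos_right (dotProduct_self_pos hx)

lemma rayleigh_smul (M : Matrix n n ℝ) {c : ℝ} (hc : c ≠ 0) (x : n → ℝ) :
    rayleigh M (c • x) = rayleigh M x := by
  simp only [rayleigh, mulVec_smul, dotProduct_smul, smul_dotProduct, smul_eq_mul, ← mul_assoc]
  exact mul_div_mul_left _ _ (mul_ne_zero hc hc)

lemma rayleigh_add_left (M N : Matrix n n ℝ) (x : n → ℝ) :
    rayleigh (M + N) x = rayleigh M x + rayleigh N x := by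
  simp only [rayleigh, add_mulVec, dotProduct_add, add_div]

lemma rayleigh_smul_left (c : ℝ) (M : Matrix n n ℝ) (x : n → ℝ) :
    rayleigh (c • M) x = c * rayleigh M x := by
  simp only [rayleigh, smul_mulVec, dotProduct_smul, smul_eq_mul, mul_div_assoc]

lemma rayleigh_of_mulVec_eq_smul {M : Matrix n n ℝ} {x : n → ℝ} {c : ℝ} (hx : x ≠ 0)
    (h : M *ᵥ x = c • x) : rayleigh M x = c := by
  rw [rayleigh, h, dotProduct_smul, smul_eq_mul, mul_div_assoc,
    div_self (dotProduct_self_pos hx).ne', mul_one]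

lemma continuousOn_rayleigh (M : Matrix n n ℝ) : ContinuousOn (rayleigh M) {0}ᶜ :=
  ((continuous_id.dotProduct (continuous_const.matrix_mulVec continuous_id)).continuousOn.div
    (continuous_id.dotProduct continuous_id).continuousOn)
    fun _ hx => (dotProduct_self_pos hx).ne'

lemma image_rayleigh_inter_sphere (M : Matrix n n ℝ) (W : Submodule ℝ (n → ℝ)) :
    rayleigh M '' ((W : Set (n → ℝ)) ∩ Metric.sphere 0 1) = rayleigh M '' (W \ {0}) := by
  refine subset_antisymm (Set.image_mono fun x ⟨hxW, hx⟩ => ⟨hxW, ?_⟩) ?_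
  · rintro rfl
    simp at hx
  · rintro _ ⟨x, ⟨hxW, hx⟩, rfl⟩
    have hx : x ≠ 0 := hx
    exact ⟨‖x‖⁻¹ • x, ⟨W.smul_mem _ hxW, mem_sphere_zero_iff_norm.mpr (norm_smul_inv_norm hx)⟩,
      rayleigh_smul M (inv_ne_zero (norm_ne_zero_iff.mpr hx)) x⟩

lemma isCompact_image_rayleigh (M : Matrix n n ℝ) (W : Submodule ℝ (n → ℝ)) :
    IsCompact (rayleigh M '' (W \ {0})) := by
  rw [← image_rayleigh_inter_sphere]
  refine ((isCompact_sphere 0 1).inter_left W.closed_of_finiteDimensional).image_of_continuousOn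
    ((continuousOn_rayleigh M).mono ?_)
  rintro x ⟨-, hx⟩ rfl
  simp at hx

lemma IsSymm.mulVec_eq_zero_of_dotProduct_mulVec_eq_zero {B : Matrix n n ℝ}
    (hB : B.IsSymm) {W : Submodule ℝ (n → ℝ)} (hW : ∀ y ∈ W, 0 ≤ y ⬝ᵥ B *ᵥ y) {x : n → ℝ}
    (hx : x ∈ W) (hBx : B *ᵥ x ∈ W) (hx0 : x ⬝ᵥ B *ᵥ x = 0) : B *ᵥ x = 0 := by
  have hsymm : x ⬝ᵥ B *ᵥ (B *ᵥ x) = B *ᵥ x ⬝ᵥ B *ᵥ x := by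
    rw [dotProduct_mulVec, ← mulVec_transpose, hB.eq, dotProduct_comm]
  have hquad (s : ℝ) :
      0 ≤ (B *ᵥ x ⬝ᵥ B *ᵥ B *ᵥ x) * (s * s) + 2 * (B *ᵥ x ⬝ᵥ B *ᵥ x) * s + 0 := by
    have := hW _ (W.add_mem hx (W.smul_mem s hBx))
    simp only [mulVec_add, mulVec_smul, dotProduct_add, add_dotProduct, dotProduct_smul,
      smul_dotProduct, smul_eq_mul, hx0, hsymm] at this
    nlinarith
  -- `s ↦ q(x + s • B x)` is a nonnegative quadratic without constant term, so its linear
  -- coefficient `2 (B x ⬝ᵥ B x)` vanishes.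
  have := discrim_le_zero hquad
  rw [discrim] at this
  exact dotProduct_self_eq_zero.mp (by nlinarith)

lemma mulVec_eq_smul_of_rayleigh_eq {M : Matrix n n ℝ} (hM : M.IsSymm)
    {W : Submodule ℝ (n → ℝ)} (hMW : ∀ y ∈ W, M *ᵥ y ∈ W) {c : ℝ}
    (hc : ∀ y ∈ W, y ≠ 0 → c ≤ rayleigh M y) {x : n → ℝ} (hx : x ∈ W) (hx0 : x ≠ 0)
    (hxc : rayleigh M x = c) : M *ᵥ x = c • x := by
  have hB : ∀ y, y ⬝ᵥ (M - c • 1) *ᵥ y = y ⬝ᵥ M *ᵥ y - c * (y ⬝ᵥ y) := fun y => by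
    simp [sub_mulVec, smul_mulVec, dotProduct_sub]
  have hBx : (M - c • 1) *ᵥ x = M *ᵥ x - c • x := by simp [sub_mulVec, smul_mulVec]
  rw [← sub_eq_zero, ← hBx]
  refine (hM.sub (isSymm_one.smul c)).mulVec_eq_zero_of_dotProduct_mulVec_eq_zero (W := W)
    (fun y hy => ?_) hx ?_ ?_
  · rcases eq_or_ne y 0 with rfl | hy0
    · simp
    have := hc y hy hy0
    rw [rayleigh, le_div_iff₀ (dotProduct_self_pos hy0)] at this
    rw [hB]; linarith
  · rw [hBx]; exact W.sub_mem (hMW x hx) (W.smul_mem c hx)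
  · rw [hB, ← hxc, rayleigh, div_mul_cancel₀ _ (dotProduct_self_pos hx0).ne', sub_self]

end Matrix

lemma SimpleGraph.Reachable.apply_eq_of_forall_adj_s14 {V β : Type*} {G : SimpleGraph V}
    {x : V → β} (h : ∀ u v, G.Adj u v → x u = x v) {a b : V} (hab : G.Reachable a b) :
    x a = x b := by
  obtain ⟨p⟩ := hab
  induction p with
  | nil => rfl
  | cons hadj _ ih => exact (h _ _ hadj).trans ih

namespace ExtremalGraphs

section MeanZero

variable (V : Type*) [Fintype V]

def meanZero : Submodule ℝ (V → ℝ) := LinearMap.ker (∑ v : V, LinearMap.proj v)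

variable {V}

lemma mem_meanZero {x : V → ℝ} : x ∈ meanZero V ↔ ∑ v, x v = 0 := by
  simp [meanZero]

lemma single_sub_single_mem_meanZero [DecidableEq V] (a b : V) :
    (Pi.single a 1 - Pi.single b 1 : V → ℝ) ∈ meanZero V := by
  simp [mem_meanZero, Finset.sum_sub_distrib]

end MeanZero

lemma exists_adj_of_mem_edgeSet {V : Type*} {G : SimpleGraph V} (e : G.edgeSet) :
    ∃ a b, G.Adj a b ∧ (e : Sym2 V) = s(a, b) := by
  obtain ⟨e, he⟩ := e
  induction e using Sym2.ind with
  | _ a b => exact ⟨a, b, he, rfl⟩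

lemma nontrivial_of_edge {V : Type*} {G : SimpleGraph V} (e : G.edgeSet) : Nontrivial V :=
  let ⟨a, b, hab, _⟩ := exists_adj_of_mem_edgeSet e
  nontrivial_of_ne a b hab.ne

section ElemLap

variable {V : Type*} [DecidableEq V] (G : SimpleGraph V)

lemma elemLap_eq_vecMulVec {e : G.edgeSet} {a b : V} (hab : G.Adj a b)
    (he : (e : Sym2 V) = s(a, b)) :
    elemLap G e = vecMulVec (Pi.single a 1 - Pi.single b 1) (Pi.single a 1 - Pi.single b 1) := by
  have hne : a ≠ b := hab.ne
  ext v w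
  simp only [elemLap, he, vecMulVec_apply, Pi.sub_apply, Pi.single_apply, Sym2.mem_iff,
    Sym2.eq_iff]
  by_cases h1 : v = a <;> by_cases h2 : v = b <;> by_cases h3 : w = a <;> by_cases h4 : w = b <;>
    by_cases h5 : v = w <;> simp_all [eq_comm]

lemma dotProduct_elemLap_mulVec [Fintype V] {e : G.edgeSet} {a b : V} (hab : G.Adj a b)
    (he : (e : Sym2 V) = s(a, b)) (x : V → ℝ) :
    x ⬝ᵥ elemLap G e *ᵥ x = (x a - x b) ^ 2 := by
  simp [elemLap_eq_vecMulVec G hab he, vecMulVec_mulVec, dotProduct_comm x, sub_dotProduct, sq]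

end ElemLap

variable {V : Type*} [Fintype V] [DecidableEq V] (G : SimpleGraph V) [DecidableRel G.Adj]

lemma wLap_isSymm (g : G.edgeSet → ℝ) : (wLap G g).IsSymm := by
  refine IsSymm.ext fun v w => ?_
  simp only [wLap, Matrix.sum_apply, Matrix.smul_apply]
  refine Finset.sum_congr rfl fun e _ => ?_
  obtain ⟨a, b, hab, he⟩ := exists_adj_of_mem_edgeSet e
  simp only [elemLap_eq_vecMulVec G hab he, vecMulVec_apply, mul_comm]

lemma wLap_mulVec_mem_meanZero (g : G.edgeSet → ℝ) (x : V → ℝ) :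
    wLap G g *ᵥ x ∈ meanZero V := by
  rw [wLap, sum_mulVec]
  refine Submodule.sum_mem _ fun e _ => ?_
  obtain ⟨a, b, hab, he⟩ := exists_adj_of_mem_edgeSet e
  rw [smul_mulVec, elemLap_eq_vecMulVec G hab he, vecMulVec_mulVec, op_smul_eq_smul]
  exact Submodule.smul_mem _ _ (Submodule.smul_mem _ _ (single_sub_single_mem_meanZero a b))

lemma wLap_add (g h : G.edgeSet → ℝ) : wLap G (g + h) = wLap G g + wLap G h := by
  simp [wLap, add_smul, Finset.sum_add_distrib]

lemma wLap_smul (c : ℝ) (g : G.edgeSet → ℝ) : wLap G (c • g) = c • wLap G g := by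
  simp [wLap, Finset.smul_sum, smul_smul]

lemma wLap_neg (g : G.edgeSet → ℝ) : wLap G (-g) = -wLap G g := by
  simp [wLap, Finset.sum_neg_distrib]

lemma dotProduct_wLap_mulVec (g : G.edgeSet → ℝ) (x : V → ℝ) :
    x ⬝ᵥ wLap G g *ᵥ x = ∑ e, g e * (x ⬝ᵥ elemLap G e *ᵥ x) := by
  simp [wLap, sum_mulVec, dotProduct_sum, smul_mulVec]

lemma dotProduct_wLap_mulVec_pos (hG : G.Connected) {g : G.edgeSet → ℝ} (hg : ∀ e, 0 < g e)
    {x : V → ℝ} (hx : x ∈ meanZero V) (hx0 : x ≠ 0) : 0 < x ⬝ᵥ wLap G g *ᵥ x := by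
  have hterm (e : G.edgeSet) : 0 ≤ g e * (x ⬝ᵥ elemLap G e *ᵥ x) := by
    obtain ⟨a, b, hab, he⟩ := exists_adj_of_mem_edgeSet e
    rw [dotProduct_elemLap_mulVec G hab he]
    exact mul_nonneg (hg e).le (sq_nonneg _)
  rw [dotProduct_wLap_mulVec]
  refine (Finset.sum_nonneg fun e _ => hterm e).lt_of_ne' fun h => hx0 ?_
  have hadj (u v : V) (huv : G.Adj u v) : x u = x v := by
    have := (Finset.sum_eq_zero_iff_of_nonneg fun e _ => hterm e).mp h ⟨s(u, v), huv⟩ (mem_univ _)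
    rw [dotProduct_elemLap_mulVec G huv rfl, mul_eq_zero, pow_eq_zero_iff two_ne_zero,
      sub_eq_zero] at this
    exact this.resolve_left (hg _).ne'
  have hV : Nonempty V := hG.nonempty
  have hconst (v : V) : x v = x hV.some := (hG v _).apply_eq_of_forall_adj_s14 hadj
  have hsum : (Fintype.card V : ℝ) * x hV.some = 0 := by
    simpa [hconst, mem_meanZero] using hx
  have hx₀ : x hV.some = 0 := (mul_eq_zero.mp hsum).resolve_left (by simp)
  ext v
  rw [hconst, hx₀, Pi.zero_apply]

lemma lambda1_eq_sInf (g : G.edgeSet → ℝ) :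
    lambda1 G g = sInf (rayleigh (wLap G g) '' (meanZero V \ {0})) := by
  rw [lambda1]
  congr 1
  ext r
  simp [rayleigh, mem_meanZero, eq_comm, and_assoc, and_comm]

lemma lambda1_le_rayleigh (g : G.edgeSet → ℝ) {x : V → ℝ} (hx : x ∈ meanZero V) (hx0 : x ≠ 0) :
    lambda1 G g ≤ rayleigh (wLap G g) x := by
  rw [lambda1_eq_sInf]
  exact csInf_le (isCompact_image_rayleigh _ _).bddBelow ⟨x, ⟨hx, hx0⟩, rfl⟩

lemma exists_rayleigh_eq_lambda1 [Nontrivial V] (g : G.edgeSet → ℝ) :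
    ∃ x ∈ (meanZero V : Set (V → ℝ)) ∩ Metric.sphere 0 1, rayleigh (wLap G g) x = lambda1 G g := by
  obtain ⟨a, b, hab⟩ := exists_pair_ne V
  have hne : (rayleigh (wLap G g) '' (meanZero V \ {0})).Nonempty :=
    ⟨_, _, ⟨single_sub_single_mem_meanZero a b, fun h => by simpa [hab] using congrFun h a⟩, rfl⟩
  have := (isCompact_image_rayleigh _ _).sInf_mem hne
  rwa [← lambda1_eq_sInf, ← image_rayleigh_inter_sphere] at this

lemma lambda1_pos [Nontrivial V] (hG : G.Connected) {f : G.edgeSet → ℝ} (hf : ∀ e, 0 < f e) :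
    0 < lambda1 G f := by
  obtain ⟨x, ⟨hx, hx1⟩, hxf⟩ := exists_rayleigh_eq_lambda1 G f
  have hx0 : x ≠ 0 := Metric.ne_of_mem_sphere hx1 one_ne_zero
  rw [← hxf, rayleigh_pos_iff _ hx0]
  exact dotProduct_wLap_mulVec_pos G hG hf hx hx0

lemma mem_meanZero_of_mem_eigOne [Nontrivial V] (hG : G.Connected) {f : G.edgeSet → ℝ}
    (hf : ∀ e, 0 < f e) {x : V → ℝ} (hx : x ∈ EigOne G f) : x ∈ meanZero V := by
  have h := wLap_mulVec_mem_meanZero G f x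
  rw [hx] at h
  exact (Submodule.smul_mem_iff _ (lambda1_pos G hG hf).ne').mp h

lemma mem_eigOne_of_rayleigh_eq_lambda1 {f : G.edgeSet → ℝ} {x : V → ℝ} (hx : x ∈ meanZero V)
    (hx0 : x ≠ 0) (hxf : rayleigh (wLap G f) x = lambda1 G f) : x ∈ EigOne G f :=
  mulVec_eq_smul_of_rayleigh_eq (wLap_isSymm G f) (fun y _ => wLap_mulVec_mem_meanZero G f y)
    (fun _ hy hy0 => lambda1_le_rayleigh G f hy hy0) hx hx0 hxf

lemma exists_lambda1_lt_of_pos_on_eigOne [Nontrivial V] {f Q : G.edgeSet → ℝ}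
    (hQ : ∀ x ∈ EigOne G f, x ≠ 0 → 0 < x ⬝ᵥ wLap G Q *ᵥ x) :
    ∃ t : ℝ, 0 < t ∧ lambda1 G f < lambda1 G (f + t • Q) := by
  set K := (meanZero V : Set (V → ℝ)) ∩ Metric.sphere 0 1
  have hK0 (y : V → ℝ) (hy : y ∈ K) : y ≠ 0 := Metric.ne_of_mem_sphere hy.2 one_ne_zero
  have hKc : IsCompact K :=
    (isCompact_sphere 0 1).inter_left (meanZero V).closed_of_finiteDimensional
  obtain ⟨t, ht, hlt⟩ := hKc.exists_pos_forall_lt_add_mul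
    ((continuousOn_rayleigh _).mono hK0) ((continuousOn_rayleigh _).mono hK0)
    (fun y hy => lambda1_le_rayleigh G f hy.1 (hK0 y hy))
    (fun y hy hyf => (rayleigh_pos_iff _ (hK0 y hy)).mpr
      (hQ y (mem_eigOne_of_rayleigh_eq_lambda1 G hy.1 (hK0 y hy) hyf) (hK0 y hy)))
  obtain ⟨x, hx, hxg⟩ := exists_rayleigh_eq_lambda1 G (f + t • Q)
  refine ⟨t, ht, ?_⟩
  rw [← hxg, wLap_add, wLap_smul, rayleigh_add_left, rayleigh_smul_left]
  exact hlt x hx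

lemma pos_on_eigOne_of_lambda1_lt [Nontrivial V] (hG : G.Connected) {f g : G.edgeSet → ℝ}
    (hf : ∀ e, 0 < f e) (hlt : lambda1 G f < lambda1 G g) :
    ∀ x ∈ EigOne G f, x ≠ 0 → 0 < x ⬝ᵥ wLap G (g - f) *ᵥ x := by
  intro x hx hx0
  have hg : wLap G g = wLap G f + wLap G (g - f) := by rw [← wLap_add, add_sub_cancel]
  have h := lambda1_le_rayleigh G g (mem_meanZero_of_mem_eigOne G hG hf hx) hx0
  rw [hg, rayleigh_add_left, rayleigh_of_mulVec_eq_smul hx0 hx] at h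
  rw [← rayleigh_pos_iff _ hx0]
  linarith

/-- Let `S` be an affine subspace of edge valuations containing a
valuation `f` with all weights positive. Then `f` maximizes `λ₁` over `S` iff for every
nonzero tangent variation `Q` of `S`, the quadratic form of the induced Laplacian
variation `Q_Δ = ∑_e Q(e) • Q_e`, restricted to the eigenspace `E_{λ₁}`, is indefinite
(neither positive definite nor negative definite on `E_{λ₁}`). -/
theorem lambda1_max_iff_indefinite (hG : G.Connected)
    (S : AffineSubspace ℝ (G.edgeSet → ℝ)) (f : G.edgeSet → ℝ)
    (hfS : f ∈ S) (hpos : ∀ e, 0 < f e) :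
    (∀ g ∈ (S : Set (G.edgeSet → ℝ)), lambda1 G g ≤ lambda1 G f) ↔
      ∀ Q ∈ S.direction, Q ≠ 0 →
        ¬ (∀ x ∈ EigOne G f, x ≠ 0 → 0 < x ⬝ᵥ (wLap G Q) *ᵥ x) ∧
        ¬ (∀ x ∈ EigOne G f, x ≠ 0 → x ⬝ᵥ (wLap G Q) *ᵥ x < 0) := by
  constructor
  · intro hmax Q hQ hQ0
    have := nontrivial_of_edge (Function.ne_iff.mp hQ0).choose
    have hnot (P) (hP : P ∈ S.direction) : ¬ ∀ x ∈ EigOne G f, x ≠ 0 → 0 < x ⬝ᵥ wLap G P *ᵥ x := by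
      intro hPpos
      obtain ⟨t, -, ht⟩ := exists_lambda1_lt_of_pos_on_eigOne G hPpos
      have hmem : f + t • P ∈ S := by
        simpa [add_comm] using S.vadd_mem_of_mem_direction (S.direction.smul_mem t hP) hfS
      exact (hmax _ hmem).not_gt ht
    refine ⟨hnot Q hQ, fun hneg => hnot (-Q) (S.direction.neg_mem hQ) fun x hx hx0 => ?_⟩
    rw [wLap_neg, neg_mulVec, dotProduct_neg, neg_pos]
    exact hneg x hx hx0
  · intro hind g hg
    by_contra! hlt
    have hgf : g - f ≠ 0 := sub_ne_zero.mpr fun h => (h ▸ hlt).false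
    have := nontrivial_of_edge (Function.ne_iff.mp hgf).choose
    exact (hind _ (S.vsub_mem_direction hg hfS) hgf).1 (pos_on_eigOne_of_lambda1_lt G hG hpos hlt)

end ExtremalGraphs
end

section
/- Let G be a finite connected simple graph whose (unweighted) Laplacian Δ admits an eigenvector f : V(G) → ℝ with nonzero eigenvalue such that |f(x) − f(y)| = c for every pair of adjacent vertices x, y, where c is a constant. Then c ≠ 0 and G is bipartite: G contains no odd cycles, since around any cycle the increments f(u_i) − f(u_{i−1}) are each ±c and must sum to zero. -/
/-!
If `c = 0`, then `f` is constant across edges, so `Δ f = 0`, and `μ ≠ 0` forces `f = 0`.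
Otherwise `f / c` changes by exactly `±1` along every edge, so the parity of `⌊f / c⌋` is a
proper 2-colouring, and a 2-colourable graph has no closed walk of odd length.
-/

open Matrix Finset
open scoped Classical

namespace ExtremalGraphs

variable {V : Type*} [Fintype V] [DecidableEq V] (G : SimpleGraph V) [DecidableRel G.Adj]

/-- The (unweighted) graph Laplacian acting on functions:
`(Δ g)(v) = ∑_{w ∼ v} (g(v) - g(w))`. -/
noncomputable def lapApply {W : Type*} [Fintype W] (H : SimpleGraph W) (g : W → ℝ)
    (v : W) : ℝ :=
  ∑ w, if H.Adj v w then g v - g w else 0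

lemma lapApply_eq_zero_of_forall_adj_eq {W : Type*} [Fintype W] {H : SimpleGraph W}
    {g : W → ℝ} (hg : ∀ v w, H.Adj v w → g v = g w) (v : W) : lapApply H g v = 0 :=
  Finset.sum_eq_zero fun w _ => ite_eq_right_iff.mpr fun h => sub_eq_zero.mpr (hg v w h)

lemma eigenvector_eq_zero_of_forall_adj_eq {W : Type*} [Fintype W] {H : SimpleGraph W}
    {g : W → ℝ} {μ : ℝ} (hμ : μ ≠ 0) (heig : ∀ v, lapApply H g v = μ * g v)
    (hg : ∀ v w, H.Adj v w → g v = g w) : g = 0 := by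
  funext v
  have h := heig v
  rw [lapApply_eq_zero_of_forall_adj_eq hg] at h
  exact (mul_eq_zero.mp h.symm).resolve_left hμ

lemma colorable_two_of_abs_sub_eq_one {W : Type*} {H : SimpleGraph W} (g : W → ℝ)
    (hg : ∀ v w, H.Adj v w → |g v - g w| = 1) : H.Colorable 2 := by
  let C : H.Coloring (ZMod 2) := SimpleGraph.Coloring.mk (fun v => (⌊g v⌋ : ZMod 2))
    fun {v w} hvw => by
      have hfloor : ⌊g v⌋ = ⌊g w⌋ + 1 ∨ ⌊g v⌋ = ⌊g w⌋ - 1 := by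
        rcases abs_eq (zero_le_one' ℝ) |>.mp (hg v w hvw) with h | h
        · left; rw [← Int.floor_add_one]; congr 1; linarith
        · right; rw [← Int.floor_sub_one]; congr 1; linarith
      rcases hfloor with h | h <;> rw [h] <;> push_cast <;> simp
  simpa using C.colorable

theorem const_gradient_eigenvector_bipartite (f : V → ℝ) (μ c : ℝ)
    (hf : f ≠ 0) (hμ : μ ≠ 0) (heig : ∀ v, lapApply G f v = μ * f v)
    (hgrad : ∀ v w : V, G.Adj v w → |f v - f w| = c) :
    c ≠ 0 ∧ G.Colorable 2 ∧ ∀ (v : V) (p : G.Walk v v), p.IsCycle → ¬ Odd p.length := by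
  have hc : c ≠ 0 := by
    rintro rfl
    exact hf <| eigenvector_eq_zero_of_forall_adj_eq hμ heig fun v w h =>
      sub_eq_zero.mp (abs_eq_zero.mp (hgrad v w h))
  have hcol : G.Colorable 2 := by
    refine colorable_two_of_abs_sub_eq_one (fun v => f v / c) fun v w h => ?_
    have hc_nonneg : 0 ≤ c := hgrad v w h ▸ abs_nonneg _
    rw [← sub_div, abs_div, hgrad v w h, abs_of_nonneg hc_nonneg, div_self hc]
  exact ⟨hc, hcol, fun v p _ => Nat.not_odd_iff_even.mpr
    (SimpleGraph.two_colorable_iff_forall_loop_even.mp hcol v p)⟩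

end ExtremalGraphs
end
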